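/- arXiv:1005.0177 — 3 statements merged into one kernel-verified Lean document; each statement's English description precedes it below -/
import Mathlib

section
/- For every positive integer n and all a, b ∈ ℚ, the following identity of formal power series holds in ℚ[[T]]: n · (𝐁(bT))^{n+1} · e^{aT} = (n − nbT + aT) · (𝐁(bT))^n · e^{aT} − T · (d/dT)((𝐁(bT))^n · e^{aT}), where d/dT is the formal derivative of power series. -/
open PowerSeries

lemma deriv_exp' : PowerSeries.derivative ℚ (exp ℚ) = exp ℚ := by
  ext n
  rw [PowerSeries.coeff_derivative, coeff_exp, coeff_exp]
  simp only [Algebra.algebraMap_self, RingHom.id_apply]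
  field_simp [Nat.factorial_succ]
  push_cast [Nat.factorial_succ]
  ring

lemma deriv_rescale (c : ℚ) (f : ℚ⟦X⟧) :
    PowerSeries.derivative ℚ (rescale c f) = C c * rescale c (PowerSeries.derivative ℚ f) := by
  ext n
  rw [PowerSeries.coeff_derivative, coeff_rescale, coeff_C_mul, coeff_rescale,
    PowerSeries.coeff_derivative, pow_succ]
  ring

lemma deriv_rescale_exp (c : ℚ) :
    PowerSeries.derivative ℚ (rescale c (exp ℚ)) = C c * rescale c (exp ℚ) := by
  rw [deriv_rescale, deriv_exp']

lemma key (b : ℚ) :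
    X * PowerSeries.derivative ℚ (rescale b (bernoulliPowerSeries ℚ)) =
      rescale b (bernoulliPowerSeries ℚ) - C b * X * rescale b (bernoulliPowerSeries ℚ)
        - (rescale b (bernoulliPowerSeries ℚ)) ^ 2 := by
  rcases eq_or_ne b 0 with rfl | hb
  · have h0 : rescale (0:ℚ) (bernoulliPowerSeries ℚ) = 1 := by
      rw [rescale_zero]
      simp [bernoulliPowerSeries, coeff_zero_eq_constantCoeff]
    rw [h0]
    simp
  · set B := rescale b (bernoulliPowerSeries ℚ) with hBdef
    set E := rescale b (exp ℚ) with hEdef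
    have hB : B * (E - 1) = C b * X := by
      rw [hBdef, hEdef, ← map_one (rescale b), ← map_sub, ← map_mul,
        bernoulliPowerSeries_mul_exp_sub_one, rescale_X]
    have hDE : PowerSeries.derivative ℚ E = C b * E := by
      rw [hEdef]; exact deriv_rescale_exp b
    have hD : PowerSeries.derivative ℚ B * (E - 1) + B * (C b * E) = C b := by
      have := congrArg (PowerSeries.derivative ℚ) hB
      simp only [Derivation.leibniz, smul_eq_mul, map_sub, Derivation.map_one_eq_zero,
        sub_zero, hDE, derivative_C, derivative_X, mul_one, mul_zero, zero_mul] at this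
      linear_combination this
    have hne : E - 1 ≠ 0 := by
      intro h
      have := congrArg (coeff 1) h
      simp [hEdef, coeff_rescale, coeff_exp, coeff_one] at this
      exact hb this
    have h2 : (E - 1) ^ 2 ≠ 0 := pow_ne_zero 2 hne
    apply mul_right_cancel₀ h2
    linear_combination (X * (E - 1)) * hD +
      (B * (E - 1) + C b * X - C b * X * E - (E - 1) + C b * X * (E - 1)) * hB

/-- For every positive integer `n` and `a b : ℚ`, in `ℚ[[T]]` :
`n · 𝐁(bT)^{n+1} · e^{aT} = (n − nbT + aT) · 𝐁(bT)^n · e^{aT} − T · d/dT(𝐁(bT)^n · e^{aT})`. -/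
theorem order_raising_formula (n : ℕ) (hn : 0 < n) (a b : ℚ) :
    (n : ℚ⟦X⟧) * ((rescale b (bernoulliPowerSeries ℚ)) ^ (n + 1) * rescale a (exp ℚ)) =
      ((n : ℚ⟦X⟧) - (n : ℚ⟦X⟧) * C b * X + C a * X) *
          ((rescale b (bernoulliPowerSeries ℚ)) ^ n * rescale a (exp ℚ)) -
        X * (PowerSeries.derivative ℚ
          ((rescale b (bernoulliPowerSeries ℚ)) ^ n * rescale a (exp ℚ))) := by
  obtain ⟨m, rfl⟩ := Nat.exists_eq_add_of_lt hn
  set B := rescale b (bernoulliPowerSeries ℚ) with hBdef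
  set E := rescale a (exp ℚ) with hEdef
  have hDprod : PowerSeries.derivative ℚ (B ^ (m + 1) * E) =
      (m + 1 : ℚ⟦X⟧) * B ^ m * PowerSeries.derivative ℚ B * E + C a * B ^ (m + 1) * E := by
    rw [Derivation.leibniz, Derivation.leibniz_pow, deriv_rescale_exp, ← hEdef]
    simp only [smul_eq_mul, Nat.add_sub_cancel, nsmul_eq_mul]
    push_cast
    ring
  rw [zero_add] at *
  rw [hDprod]
  have hkey := key b
  push_cast
  linear_combination ((m + 1 : ℚ⟦X⟧) * B ^ m * E) * hkey
end

section
/- Order-lowering formula for Bernoulli polynomials of higher order: for every positive integer n, every integer i ≥ 1, and every a ∈ ℚ, one has B^{(n+1)}_i(a) = (1 − i/n) · B^{(n)}_i(a) + (a − n) · (i/n) · B^{(n)}_{i−1}(a). -/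
open PowerSeries

/-- The derivative of `exp` is `exp`. -/
lemma dexp_aux : d⁄dX ℚ (exp ℚ) = exp ℚ := by
  ext n
  rw [coeff_derivative, coeff_exp, coeff_exp]
  simp only [Algebra.algebraMap_self, RingHom.id_apply]
  rw [Nat.factorial_succ]
  push_cast
  have h1 : ((n:ℚ)+1) ≠ 0 := by positivity
  field_simp

/-- The derivative of `e^{aT}` is `a • e^{aT}`. -/
lemma drescale_exp_aux (a : ℚ) : d⁄dX ℚ (rescale a (exp ℚ)) = a • rescale a (exp ℚ) := by
  ext n
  rw [coeff_derivative, map_smul, coeff_rescale, coeff_rescale, coeff_exp, coeff_exp]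
  simp only [Algebra.algebraMap_self, RingHom.id_apply, smul_eq_mul]
  rw [Nat.factorial_succ, pow_succ]
  push_cast
  have h1 : ((n:ℚ)+1) ≠ 0 := by positivity
  field_simp

/-- Key differential equation for `𝐁`: `T·𝐁' = 𝐁 − T·𝐁 − 𝐁²`. -/
lemma key_dB_aux : X * d⁄dX ℚ (bernoulliPowerSeries ℚ) =
    bernoulliPowerSeries ℚ - X * bernoulliPowerSeries ℚ - (bernoulliPowerSeries ℚ)^2 := by
  set B := bernoulliPowerSeries ℚ with hB
  have h : B * (exp ℚ - 1) = X := bernoulliPowerSeries_mul_exp_sub_one ℚ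
  have hd : B • (d⁄dX ℚ) (exp ℚ - 1) + (exp ℚ - 1) • d⁄dX ℚ B = 1 := by
    rw [← Derivation.leibniz, h, derivative_X]
  rw [map_sub, dexp_aux, Derivation.map_one_eq_zero, sub_zero] at hd
  have h2 : B * (B * exp ℚ + (exp ℚ - 1) * d⁄dX ℚ B) = B * 1 := by
    rw [show B * exp ℚ + (exp ℚ - 1) * d⁄dX ℚ B = B • exp ℚ + (exp ℚ - 1) • d⁄dX ℚ B by
      simp [smul_eq_mul], hd]
  linear_combination (-(d⁄dX ℚ B) - B) * h + h2

/-- The main power-series identity behind the order-lowering formula. -/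
lemma main_series_aux (m : ℕ) (a : ℚ) :
    X * d⁄dX ℚ ((bernoulliPowerSeries ℚ)^(m+1) * rescale a (exp ℚ)) =
      C a * (X * ((bernoulliPowerSeries ℚ)^(m+1) * rescale a (exp ℚ))) +
      (((m:ℚ⟦X⟧))+1) * ((bernoulliPowerSeries ℚ)^(m+1) * rescale a (exp ℚ)
        - X * ((bernoulliPowerSeries ℚ)^(m+1) * rescale a (exp ℚ))
        - (bernoulliPowerSeries ℚ)^(m+2) * rescale a (exp ℚ)) := by
  set B := bernoulliPowerSeries ℚ with hB
  set E := rescale a (exp ℚ) with hE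
  have hleib : d⁄dX ℚ (B^(m+1) * E) = B^(m+1) • d⁄dX ℚ E + E • d⁄dX ℚ (B^(m+1)) :=
    Derivation.leibniz _ _ _
  rw [hleib, drescale_exp_aux, Derivation.leibniz_pow]
  simp only [smul_eq_mul, Nat.add_sub_cancel, nsmul_eq_mul, Nat.cast_add, Nat.cast_one,
    smul_eq_C_mul]
  have : X * (B^(m+1) * (C a * E) + E * (((m:ℚ⟦X⟧)+1) * (B^m * d⁄dX ℚ B))) =
      C a * (X * (B^(m+1) * E)) + ((m:ℚ⟦X⟧)+1) * (E * B^m * (X * d⁄dX ℚ B)) := by ring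
  rw [this, key_dB_aux]
  ring

/-- `B^{(n)}_i(a)`: the `i`-th Bernoulli polynomial of order `n` evaluated at `a`,
defined as `i!` times the coefficient of `T^i` in `𝐁^n · e^{aT}`. -/
noncomputable def bernoulliHigherOrder (n i : ℕ) (a : ℚ) : ℚ :=
  (i.factorial : ℚ) * coeff (R := ℚ) i ((bernoulliPowerSeries ℚ) ^ n * rescale a (exp ℚ))

/-- Order-lowering formula: for `n ≥ 1`, `i ≥ 1`, `a ∈ ℚ`,
`B^{(n+1)}_i(a) = (1 − i/n) · B^{(n)}_i(a) + (a − n) · (i/n) · B^{(n)}_{i−1}(a)`. -/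
theorem bernoulli_order_lowering (n : ℕ) (hn : 0 < n) (i : ℕ) (hi : 1 ≤ i) (a : ℚ) :
    bernoulliHigherOrder (n + 1) i a =
      (1 - (i : ℚ) / n) * bernoulliHigherOrder n i a +
        (a - n) * ((i : ℚ) / n) * bernoulliHigherOrder n (i - 1) a := by
  obtain ⟨m, rfl⟩ : ∃ m, n = m + 1 := ⟨n - 1, (Nat.succ_pred_eq_of_pos hn).symm⟩
  obtain ⟨j, rfl⟩ : ∃ j, i = j + 1 := ⟨i - 1, (Nat.succ_pred_eq_of_pos hi).symm⟩
  have hcoeff := congrArg (coeff (R := ℚ) (j+1)) (main_series_aux m a)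
  set B := bernoulliPowerSeries ℚ
  set E := rescale a (exp ℚ)
  have hcast : ((m:ℚ⟦X⟧)+1) = C ((m:ℚ)+1) := by simp
  rw [coeff_succ_X_mul, coeff_derivative, map_add, hcast, coeff_C_mul, coeff_C_mul,
    coeff_succ_X_mul, map_sub, map_sub, coeff_succ_X_mul] at hcoeff
  set c1 := coeff (j+1) (B^(m+1) * E)
  set c0 := coeff j (B^(m+1) * E)
  set d1 := coeff (j+1) (B^(m+1+1) * E) with hd1
  have hkey : ((m:ℚ)+1) * d1 = ((m:ℚ) - j) * c1 + (a - m - 1) * c0 := by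
    linear_combination hcoeff
  simp only [bernoulliHigherOrder, Nat.add_sub_cancel]
  have hm : ((m:ℚ)+1) ≠ 0 := by positivity
  rw [Nat.factorial_succ]
  push_cast
  field_simp
  linear_combination hkey
end

section
/- For every integer n > 1, Σ_{i=0}^{n} 3^{2i} · 2^{2n−2i} · C(2n,2i) · B_{2i} · B_{2n−2i} = 4n·3^{2n−2} · B_{2n−1}(1/3) + (1−2n) · B_{2n}, where B_k denotes the k-th Bernoulli number and B_{2n−1}(1/3) the (2n−1)-st Bernoulli polynomial evaluated at 1/3. -/
open Finset

section AuxBernoulli23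

open PowerSeries

noncomputable def ee : ℚ⟦X⟧ := exp ℚ
noncomputable def eb : ℚ⟦X⟧ := rescale (-1) ee
noncomputable def GG : ℚ⟦X⟧ := bernoulliPowerSeries ℚ
noncomputable def BB : ℚ⟦X⟧ := PowerSeries.mk fun m =>
  Polynomial.aeval (1/3 : ℚ) ((1 / (Nat.factorial m) : ℚ) • Polynomial.bernoulli m)
noncomputable def HH : ℚ⟦X⟧ := rescale 3 BB
noncomputable def Hb : ℚ⟦X⟧ := rescale (-1) HH
noncomputable def KK : ℚ⟦X⟧ := GG - X * d⁄dX ℚ GG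
noncomputable def PP : ℚ⟦X⟧ := rescale 3 GG
noncomputable def QQ : ℚ⟦X⟧ := rescale 2 GG
noncomputable def Pb : ℚ⟦X⟧ := rescale (-1) PP
noncomputable def Qb : ℚ⟦X⟧ := rescale (-1) QQ

lemma h_e : ee * eb = 1 := exp_mul_exp_neg_eq_one
lemma hG : GG * (ee - 1) = X := bernoulliPowerSeries_mul_exp_sub_one ℚ
lemma resc_exp (k : ℕ) : rescale ((k:ℚ)) ee = ee ^ k := by
  rw [ee, exp_pow_eq_rescale_exp]
lemma resc_exp3 : rescale (3:ℚ) (exp ℚ) = ee ^ 3 := by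
  rw [show (3:ℚ) = ((3:ℕ):ℚ) by norm_num, show exp ℚ = ee from rfl, resc_exp]
lemma resc_exp2 : rescale (2:ℚ) (exp ℚ) = ee ^ 2 := by
  rw [show (2:ℚ) = ((2:ℕ):ℚ) by norm_num, show exp ℚ = ee from rfl, resc_exp]

lemma hP : PP * (ee ^ 3 - 1) = 3 * X := by
  have := congrArg (rescale (3:ℚ)) hG
  rw [show GG * (ee - 1) = GG * (exp ℚ - 1) from rfl] at this
  rw [map_mul, map_sub, map_one, rescale_X, resc_exp3] at this
  rw [PP, this]; congr 1

lemma hQ : QQ * (ee ^ 2 - 1) = 2 * X := by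
  have := congrArg (rescale (2:ℚ)) hG
  rw [show GG * (ee - 1) = GG * (exp ℚ - 1) from rfl] at this
  rw [map_mul, map_sub, map_one, rescale_X, resc_exp2] at this
  rw [QQ, this]; congr 1

lemma hPb0 : Pb * (eb ^ 3 - 1) = -(3 * X) := by
  have := congrArg (rescale (-1:ℚ)) hP
  rw [map_mul, map_sub, map_one, map_pow, map_mul, rescale_X] at this
  simp only [map_ofNat, map_neg, map_one] at this
  rw [Pb, eb, this]
  ring

lemma hQb0 : Qb * (eb ^ 2 - 1) = -(2 * X) := by
  have := congrArg (rescale (-1:ℚ)) hQ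
  rw [map_mul, map_sub, map_one, map_pow, map_mul, rescale_X] at this
  simp only [map_ofNat, map_neg, map_one] at this
  rw [Qb, eb, this]
  ring

lemma hPb : Pb * (ee ^ 3 - 1) = 3 * X * ee ^ 3 := by
  linear_combination (-(ee^3)) * hPb0 +
    (Pb * ((ee*eb)^2 + ee*eb + 1)) * h_e

lemma hQb : Qb * (ee ^ 2 - 1) = 2 * X * ee ^ 2 := by
  linear_combination (-(ee^2)) * hQb0 + (Qb * (ee*eb + 1)) * h_e

lemma hH : HH * (ee ^ 3 - 1) = 3 * X * ee := by
  have h0 := Polynomial.bernoulli_generating_function (1/3 : ℚ)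
  have := congrArg (rescale (3:ℚ)) h0
  rw [map_mul, map_sub, map_one, map_mul, rescale_X, rescale_rescale,
    show ((1:ℚ)/3*3) = 1 by norm_num, rescale_one, RingHom.id_apply, resc_exp3,
    show exp ℚ = ee from rfl] at this
  rw [HH, BB, this, show ((C (R := ℚ)) 3) = (3:ℚ⟦X⟧) from map_ofNat (C (R := ℚ)) 3]

lemma hHb0 : Hb * (eb ^ 3 - 1) = -(3 * X) * eb := by
  have := congrArg (rescale (-1:ℚ)) hH
  rw [map_mul, map_sub, map_one, map_pow, map_mul, map_mul, rescale_X] at this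
  simp only [map_ofNat, map_neg, map_one] at this
  rw [Hb, eb, this]
  ring

lemma hHb : Hb * (ee ^ 3 - 1) = 3 * X * ee ^ 2 := by
  linear_combination (-(ee^3)) * hHb0 + (Hb * ((ee*eb)^2 + ee*eb + 1) + 3*X*ee^2) * h_e

lemma hG' : (d⁄dX ℚ GG) * (ee - 1) + GG * ee = 1 := by
  have := congrArg (d⁄dX ℚ) hG
  rw [Derivation.leibniz, map_sub, derivative_X] at this
  have he' : d⁄dX ℚ ee = ee := by
    ext n
    rw [coeff_derivative]
    simp [ee, exp, coeff_mk]
    rw [Nat.factorial_succ]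
    push_cast
    field_simp
  rw [he'] at this
  rw [smul_eq_mul, smul_eq_mul, Derivation.map_one_eq_zero, sub_zero] at this
  linear_combination this

lemma hK : KK * (ee - 1) ^ 2 = X ^ 2 * ee := by
  rw [KK]
  linear_combination ((ee-1) + X*ee) * hG - X*(ee-1)*hG'

lemma coeff_one_exp_pow (k : ℕ) : coeff 1 (ee ^ k) = k := by
  rw [← resc_exp k]
  simp [coeff_rescale, ee, exp, coeff_mk]

lemma exp_pow_sub_one_ne_zero {k : ℕ} (hk : k ≠ 0) : (ee ^ k - 1 : ℚ⟦X⟧) ≠ 0 := by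
  intro h
  have := congrArg (coeff 1) h
  rw [map_sub, coeff_one_exp_pow] at this
  simp at this
  exact hk this

lemma claimA : 3*(PP*QQ) + 3*(Pb*Qb)
    = 2*(X*HH) - 2*(X*Hb) + 6*KK + 18*X^2 := by
  have hD : ((ee^3-1)*((ee^2-1)*(ee-1)^2) : ℚ⟦X⟧) ≠ 0 := by
    refine mul_ne_zero (exp_pow_sub_one_ne_zero (by norm_num))
      (mul_ne_zero (exp_pow_sub_one_ne_zero (by norm_num)) (pow_ne_zero _ ?_))
    have := exp_pow_sub_one_ne_zero (k := 1) (by norm_num)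
    simpa using this
  apply mul_right_cancel₀ hD
  calc (3*(PP*QQ) + 3*(Pb*Qb)) * ((ee^3-1)*((ee^2-1)*(ee-1)^2))
      = 3*((PP*(ee^3-1))*(QQ*(ee^2-1)))*(ee-1)^2
        + 3*((Pb*(ee^3-1))*(Qb*(ee^2-1)))*(ee-1)^2 := by ring
    _ = 3*((3*X)*(2*X))*(ee-1)^2 + 3*((3*X*ee^3)*(2*X*ee^2))*(ee-1)^2 := by
        rw [hP, hQ, hPb, hQb]
    _ = 2*X*(3*X*ee)*((ee^2-1)*(ee-1)^2) - 2*X*(3*X*ee^2)*((ee^2-1)*(ee-1)^2)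
        + 6*(X^2*ee)*((ee^3-1)*(ee^2-1)) + 18*X^2*((ee^3-1)*((ee^2-1)*(ee-1)^2)) := by
        ring
    _ = 2*X*(HH*(ee^3-1))*((ee^2-1)*(ee-1)^2) - 2*X*(Hb*(ee^3-1))*((ee^2-1)*(ee-1)^2)
        + 6*(KK*(ee-1)^2)*((ee^3-1)*(ee^2-1)) + 18*X^2*((ee^3-1)*((ee^2-1)*(ee-1)^2)) := by
        rw [hH, hHb, hK]
    _ = (2*(X*HH) - 2*(X*Hb) + 6*KK + 18*X^2) * ((ee^3-1)*((ee^2-1)*(ee-1)^2)) := by ring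

lemma cGG (k : ℕ) : coeff k GG = bernoulli k / (Nat.factorial k) := by
  simp [GG, bernoulliPowerSeries, coeff_mk]

lemma cPP (k : ℕ) : coeff k PP = 3^k * (bernoulli k / (Nat.factorial k)) := by
  simp [PP, coeff_rescale, cGG]

lemma cQQ (k : ℕ) : coeff k QQ = 2^k * (bernoulli k / (Nat.factorial k)) := by
  simp [QQ, coeff_rescale, cGG]

lemma cPb (k : ℕ) : coeff k Pb = (-1)^k * coeff k PP := by
  simp [Pb, coeff_rescale]

lemma cQb (k : ℕ) : coeff k Qb = (-1)^k * coeff k QQ := by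
  simp [Qb, coeff_rescale]

lemma cBB (k : ℕ) : coeff k BB
    = (1/(Nat.factorial k)) * (Polynomial.bernoulli k).eval (1/3 : ℚ) := by
  simp [BB, coeff_mk, Polynomial.coe_aeval_eq_eval, Polynomial.eval_smul, smul_eq_mul]

lemma cHH (k : ℕ) : coeff k HH
    = 3^k * ((1/(Nat.factorial k)) * (Polynomial.bernoulli k).eval (1/3 : ℚ)) := by
  simp [HH, coeff_rescale, cBB]

lemma cHb (k : ℕ) : coeff k Hb = (-1)^k * coeff k HH := by
  simp [Hb, coeff_rescale]

lemma cKK (k : ℕ) : coeff (k+1) KK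
    = bernoulli (k+1) / (Nat.factorial (k+1)) * (1 - (k+1)) := by
  rw [KK, map_sub, coeff_succ_X_mul, coeff_derivative, cGG]
  ring

lemma coeffPbQb (N : ℕ) (hN : Even N) :
    coeff N (Pb * Qb) = coeff N (PP * QQ) := by
  rw [coeff_mul, coeff_mul]
  refine Finset.sum_congr rfl fun p hp => ?_
  rw [Finset.HasAntidiagonal.mem_antidiagonal] at hp
  rw [cPb, cQb]
  have : ((-1:ℚ))^p.1 * coeff p.1 PP * ((-1)^p.2 * coeff p.2 QQ)
      = (-1)^(p.1+p.2) * (coeff p.1 PP * coeff p.2 QQ) := by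
    rw [pow_add]; ring
  rw [this, hp, hN.neg_one_pow, one_mul]

lemma keylemma (m : ℕ) :
    6 * ∑ j ∈ Finset.range (2*m+5),
        (3:ℚ)^j * (bernoulli j / (Nat.factorial j)) *
          ((2:ℚ)^(2*m+4-j) * (bernoulli (2*m+4-j) / (Nat.factorial (2*m+4-j))))
      = 4 * ((3:ℚ)^(2*m+3) * ((1/(Nat.factorial (2*m+3) : ℚ)) *
            (Polynomial.bernoulli (2*m+3)).eval (1/3:ℚ)))
        + 6 * (bernoulli (2*m+4) / (Nat.factorial (2*m+4)) * (1 - ((2:ℚ)*m+4))) := by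
  have hc := congrArg (coeff (2*m+4)) claimA
  have h3 : (3:ℚ⟦X⟧) = C 3 := (map_ofNat _ _).symm
  have h2 : (2:ℚ⟦X⟧) = C 2 := (map_ofNat _ _).symm
  have h6 : (6:ℚ⟦X⟧) = C 6 := (map_ofNat _ _).symm
  have h18 : (18:ℚ⟦X⟧) = C 18 := (map_ofNat _ _).symm
  rw [h3, h2, h6, h18, map_add, map_add, map_add, map_sub, coeff_C_mul, coeff_C_mul,
    coeff_C_mul, coeff_C_mul, coeff_C_mul, coeff_C_mul] at hc
  rw [coeffPbQb _ (by exact ⟨m+2, by ring⟩)] at hc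
  rw [show 2*m+4 = (2*m+3)+1 from rfl, coeff_succ_X_mul, coeff_succ_X_mul, cKK, cHb] at hc
  rw [coeff_mul, Finset.Nat.sum_antidiagonal_eq_sum_range_succ_mk] at hc
  simp only [cPP, cQQ, cHH] at hc
  rw [show (2*m+3)+1 = 2*m+4 from rfl] at hc
  have hX2 : coeff (2*m+4) (X^2 : ℚ⟦X⟧) = 0 := by
    rw [coeff_X_pow]
    simp only [ite_eq_right_iff]
    intro h; omega
  rw [hX2] at hc
  push_cast at hc ⊢
  rw [show (2*m+3)+1 = 2*m+4 from rfl] at hc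
  rw [show ((-1:ℚ))^(2*m+3) = -1 from Odd.neg_one_pow ⟨m+1, by ring⟩] at hc
  linear_combination hc

lemma bern_odd_zero {k : ℕ} (h : Odd k) (hk : 1 < k) : bernoulli k = 0 := by
  rw [bernoulli_eq_bernoulli'_of_ne_one (by omega)]
  exact bernoulli'_eq_zero_of_odd h hk

lemma sum_parity (M : ℕ) (f : ℕ → ℚ) :
    ∑ j ∈ Finset.range (2*M+1), f j
      = ∑ i ∈ Finset.range (M+1), f (2*i) + ∑ i ∈ Finset.range M, f (2*i+1) := by
  induction M with
  | zero => simp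
  | succ M ih =>
      rw [show 2*(M+1)+1 = (2*M+1)+1+1 by ring, Finset.sum_range_succ, Finset.sum_range_succ, ih,
        Finset.sum_range_succ (fun i => f (2*i)) M]
      conv_rhs => rw [Finset.sum_range_succ, Finset.sum_range_succ]
      rw [show 2*(M+1) = 2*M+2 by ring, show 2*M+1+1 = 2*M+2 from rfl,
        Finset.sum_range_succ (fun i => f (2*i+1)) M]
      ring

lemma perterm (m j : ℕ) (hj : j ≤ 2*m+4) :
    ((2*m+4).factorial : ℚ) * ((3:ℚ)^j * (bernoulli j / (Nat.factorial j)) *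
        ((2:ℚ)^(2*m+4-j) * (bernoulli (2*m+4-j) / (Nat.factorial (2*m+4-j)))))
      = (3:ℚ)^j * (2:ℚ)^(2*m+4-j) * ((2*m+4).choose j : ℚ) * bernoulli j * bernoulli (2*m+4-j) := by
  have hch := Nat.choose_mul_factorial_mul_factorial hj
  have hcq := congrArg (Nat.cast : ℕ → ℚ) hch
  push_cast at hcq
  have hj1 : ((Nat.factorial j : ℕ) : ℚ) ≠ 0 := Nat.cast_ne_zero.2 (Nat.factorial_ne_zero _)
  have hj2 : ((Nat.factorial (2*m+4-j) : ℕ) : ℚ) ≠ 0 := Nat.cast_ne_zero.2 (Nat.factorial_ne_zero _)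
  field_simp
  linear_combination (-bernoulli j * bernoulli (2*m+4-j)) * hcq

lemma oddterm (m i : ℕ) (hi : i < m+2) :
    (3:ℚ)^(2*i+1) * (2:ℚ)^(2*m+4-(2*i+1)) * ((2*m+4).choose (2*i+1) : ℚ)
      * bernoulli (2*i+1) * bernoulli (2*m+4-(2*i+1)) = 0 := by
  rcases Nat.eq_zero_or_pos i with h0 | h1
  · subst h0
    have : bernoulli (2*m+4-1) = 0 := by
      rw [show 2*m+4-1 = 2*(m+1)+1 by omega]
      exact bern_odd_zero ⟨m+1, by ring⟩ (by omega)
    rw [show 2*0+1 = 1 from rfl, this]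
    ring
  · have : bernoulli (2*i+1) = 0 := bern_odd_zero ⟨i, rfl⟩ (by omega)
    rw [this]
    ring

end AuxBernoulli23

/-- For every integer `n > 1`,
`∑_{i=0}^{n} 3^{2i}·2^{2n−2i}·C(2n,2i)·B_{2i}·B_{2n−2i}
  = 4n·3^{2n−2}·B_{2n−1}(1/3) + (1−2n)·B_{2n}`. -/
theorem bernoulli_23_even_identity (n : ℕ) (hn : 1 < n) :
    ∑ i ∈ range (n + 1), (3 : ℚ) ^ (2 * i) * (2 : ℚ) ^ (2 * n - 2 * i) *
        ((2 * n).choose (2 * i) : ℚ) * bernoulli (2 * i) * bernoulli (2 * n - 2 * i) =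
      4 * (n : ℚ) * (3 : ℚ) ^ (2 * n - 2) *
          (Polynomial.bernoulli (2 * n - 1)).eval (1 / 3 : ℚ) +
        (1 - 2 * (n : ℚ)) * bernoulli (2 * n) := by
  obtain ⟨m, rfl⟩ : ∃ m, n = m + 2 := ⟨n - 2, by omega⟩
  simp only [show 2*(m+2) = 2*m+4 by ring, show 2*m+4-1 = 2*m+3 by omega,
    show 2*m+4-2 = 2*m+2 by omega]
  have hsum : (∑ i ∈ Finset.range (m+2+1), (3:ℚ)^(2*i) * (2:ℚ)^(2*m+4-2*i) *
        (((2*m+4).choose (2*i) : ℕ) : ℚ) * bernoulli (2*i) * bernoulli (2*m+4-2*i))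
      = ((2*m+4).factorial : ℚ) * ∑ j ∈ Finset.range (2*m+5),
          (3:ℚ)^j * (bernoulli j / (Nat.factorial j)) *
            ((2:ℚ)^(2*m+4-j) * (bernoulli (2*m+4-j) / (Nat.factorial (2*m+4-j)))) := by
    rw [Finset.mul_sum]
    have h1 : ∀ j ∈ Finset.range (2*m+5),
        ((2*m+4).factorial : ℚ) * ((3:ℚ)^j * (bernoulli j / (Nat.factorial j)) *
          ((2:ℚ)^(2*m+4-j) * (bernoulli (2*m+4-j) / (Nat.factorial (2*m+4-j)))))
        = (3:ℚ)^j * (2:ℚ)^(2*m+4-j) * (((2*m+4).choose j : ℕ) : ℚ) * bernoulli j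
            * bernoulli (2*m+4-j) := fun j hj =>
      perterm m j (by have := Finset.mem_range.1 hj; omega)
    rw [Finset.sum_congr rfl h1, show 2*m+5 = 2*(m+2)+1 by ring,
      sum_parity (m+2) (fun j => (3:ℚ)^j * (2:ℚ)^(2*m+4-j) * (((2*m+4).choose j : ℕ) : ℚ)
        * bernoulli j * bernoulli (2*m+4-j))]
    have hodd : ∑ i ∈ Finset.range (m+2), (3:ℚ)^(2*i+1) * (2:ℚ)^(2*m+4-(2*i+1)) *
        (((2*m+4).choose (2*i+1) : ℕ) : ℚ) * bernoulli (2*i+1) * bernoulli (2*m+4-(2*i+1)) = 0 :=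
      Finset.sum_eq_zero (fun i hi => oddterm m i (Finset.mem_range.1 hi))
    rw [hodd, add_zero]
  rw [hsum]
  have key := keylemma m
  have hfact : ((2*m+4).factorial : ℚ) = (2*(m:ℚ)+4) * ((2*m+3).factorial : ℚ) := by
    rw [show (2*m+4) = (2*m+3)+1 from rfl, Nat.factorial_succ]
    push_cast
    ring
  have hne3 : ((2*m+3).factorial : ℚ) ≠ 0 := Nat.cast_ne_zero.2 (Nat.factorial_ne_zero _)
  have hne4 : ((2*m+4).factorial : ℚ) ≠ 0 := Nat.cast_ne_zero.2 (Nat.factorial_ne_zero _)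
  have hc1 : ((2*m+4).factorial:ℚ) * (1/((2*m+3).factorial:ℚ)) = 2*(m:ℚ)+4 := by
    rw [hfact]; field_simp
  have hc2 : ((2*m+4).factorial:ℚ) * (bernoulli (2*m+4) / ((2*m+4).factorial:ℚ))
      = bernoulli (2*m+4) := by field_simp
  push_cast
  linear_combination (((2*m+4).factorial:ℚ)/6) * key
    + ((2:ℚ)/3*3^(2*m+3)*(Polynomial.bernoulli (2*m+3)).eval (1/3:ℚ))*hc1
    + ((1:ℚ)-(2*(m:ℚ)+4))*hc2
end
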